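/- arXiv:math/0312007 — 5 statements merged into one kernel-verified Lean document; each statement's English description precedes it below -/
import Mathlib

section
/- Let R be a commutative ring, σ : R → R a ring homomorphism, and u, v odd-symmetric units of R. Then for every f ∈ R one has 2·{u·v⁻¹·f} = {u}·{v⁻¹·f} + {v⁻¹}·{u·f} + {u·v}·{f}. -/
/-- The bracket `{r} := r + σ(r)` associated to a ring homomorphism `σ`. -/
def bracket {R : Type*} [CommRing R] (σ : R →+* R) (r : R) : R := r + σ r

/-- A unit `u` is *odd-symmetric* (w.r.t. `σ`) if `σ(u) = -u⁻¹`. -/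
def OddSymmetric {R : Type*} [CommRing R] (σ : R →+* R) (u : Rˣ) : Prop :=
  σ (u : R) = -((u⁻¹ : Rˣ) : R)

lemma oddSymmetric_inv {R : Type*} [CommRing R] (σ : R →+* R) (u : Rˣ)
    (hu : OddSymmetric σ u) : σ ((u⁻¹ : Rˣ) : R) = -(u : R) := by
  have h1 : σ ((u⁻¹ : Rˣ) : R) * σ (u : R) = 1 := by
    rw [← map_mul]; simp
  rw [hu] at h1
  have h2 : ((u⁻¹ : Rˣ) : R) * (u : R) = 1 := by simp
  calc σ ((u⁻¹ : Rˣ) : R)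
      = σ ((u⁻¹ : Rˣ) : R) * (-(((u⁻¹ : Rˣ) : R)) * -(u : R)) := by
        rw [neg_mul_neg, h2, mul_one]
    _ = (σ ((u⁻¹ : Rˣ) : R) * -((u⁻¹ : Rˣ) : R)) * -(u : R) := by ring
    _ = -(u : R) := by rw [h1, one_mul]

/-- Identity (**): `2·{u·v⁻¹·f} = {u}·{v⁻¹·f} + {v⁻¹}·{u·f} + {u·v}·{f}`
for odd-symmetric units `u, v`. -/
theorem two_mul_bracket_mul_inv_mul {R : Type*} [CommRing R] (σ : R →+* R)
    (u v : Rˣ) (hu : OddSymmetric σ u) (hv : OddSymmetric σ v) (f : R) :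
    2 * bracket σ ((u : R) * ((v⁻¹ : Rˣ) : R) * f)
      = bracket σ (u : R) * bracket σ (((v⁻¹ : Rˣ) : R) * f)
        + bracket σ (((v⁻¹ : Rˣ) : R)) * bracket σ ((u : R) * f)
        + bracket σ ((u : R) * (v : R)) * bracket σ f := by
  rw [OddSymmetric] at hu hv
  have hui := oddSymmetric_inv σ u (hu)
  have hvi := oddSymmetric_inv σ v hv
  simp only [bracket, map_mul, hu, hv, hui, hvi]
  ring
end

section
/- Let R be a commutative ring, σ : R → R a ring homomorphism, k ≥ 0, and u₁,…,u_{2k+1} odd-symmetric units of R. Then 2·{∏_{i=1}^{2k+1} u_i^{(−1)^{i+1}}} = Σ_{j=1}^{2k+1} (−1)^{j+1}·{u_j}·{(∏_{i=1}^{j−1} u_i^{(−1)^{i}})·(∏_{i=j+1}^{2k+1} u_i^{(−1)^{i+1}})}. -/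
lemma OddSymmetric.inv {R : Type*} [CommRing R] {σ : R →+* R} {u : Rˣ}
    (h : OddSymmetric σ u) : OddSymmetric σ u⁻¹ := by
  have hab : σ ((u⁻¹ : Rˣ) : R) * σ ((u : Rˣ) : R) = 1 := by
    rw [← map_mul, Units.inv_mul, map_one]
  have hcb : (-((u : Rˣ) : R)) * σ ((u : Rˣ) : R) = 1 := by
    rw [h]; rw [neg_mul_neg, Units.mul_inv]
  rw [OddSymmetric, inv_inv]
  calc σ ((u⁻¹ : Rˣ) : R)
      = σ ((u⁻¹ : Rˣ) : R) * ((-((u : Rˣ) : R)) * σ ((u : Rˣ) : R)) := by rw [hcb, mul_one]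
    _ = (-((u : Rˣ) : R)) * (σ ((u⁻¹ : Rˣ) : R) * σ ((u : Rˣ) : R)) := by ring
    _ = -((u : Rˣ) : R) := by rw [hab, mul_one]

lemma OddSymmetric.zpow_neg_one_pow {R : Type*} [CommRing R] {σ : R →+* R} {u : Rˣ}
    (h : OddSymmetric σ u) (m : ℕ) : OddSymmetric σ (u ^ ((-1 : ℤ) ^ m)) := by
  rcases Nat.even_or_odd m with he | ho
  · rw [he.neg_one_pow, zpow_one]; exact h
  · rw [ho.neg_one_pow, zpow_neg_one]; exact h.inv

/-- The alternating-product expansion: for odd-symmetric units `u₁, …, u_{2k+1}`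
(here indexed by `Fin (2k+1)`, so the paper's index `i` is our index `i + 1`),
`2·{u₁ u₂⁻¹ u₃ ⋯ u_{2k+1}} = Σ_j (−1)^{j+1} {u_j} {u₁⁻¹ u₂ ⋯ u_{j-1}^{±1} u_{j+1}^{∓1} ⋯ u_{2k+1}}`. -/
theorem two_mul_bracket_alternating_prod {R : Type*} [CommRing R] (σ : R →+* R)
    (k : ℕ) (u : Fin (2 * k + 1) → Rˣ) (hu : ∀ i, OddSymmetric σ (u i)) :
    2 * bracket σ ((∏ i, u i ^ ((-1 : ℤ) ^ (i : ℕ)) : Rˣ) : R)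
      = ∑ j : Fin (2 * k + 1), ((-1 : R) ^ (j : ℕ)) * bracket σ ((u j : Rˣ) : R)
          * bracket σ
            (((∏ i ∈ Finset.univ.filter (fun i => i < j), u i ^ ((-1 : ℤ) ^ ((i : ℕ) + 1)))
              * (∏ i ∈ Finset.univ.filter (fun i => j < i), u i ^ ((-1 : ℤ) ^ (i : ℕ))) : Rˣ) : R) := by
  classical
  set v : Fin (2 * k + 1) → Rˣ := fun i => u i ^ ((-1 : ℤ) ^ (i : ℕ)) with hv
  have hvodd : ∀ i, OddSymmetric σ (v i) := fun i => (hu i).zpow_neg_one_pow (i : ℕ)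
  set w : ℕ → Fin (2 * k + 1) → Rˣ := fun j i => if (i : ℕ) < j then (v i)⁻¹ else v i with hw
  set T : ℕ → Rˣ := fun j => ∏ i, w j i with hT
  have hwodd : ∀ j i, OddSymmetric σ (w j i) := by
    intro j i
    by_cases h : (i : ℕ) < j
    · simpa [hw, h] using (hvodd i).inv
    · simpa [hw, h] using hvodd i
  have hsigmaT : ∀ j, σ ((T j : Rˣ) : R) = -(((T j)⁻¹ : Rˣ) : R) := by
    intro j
    have h1 : ((T j : Rˣ) : R) = ∏ i, ((w j i : Rˣ) : R) := by
      rw [hT]; exact Units.coe_prod _ _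
    have h2 : (((T j)⁻¹ : Rˣ) : R) = ∏ i, (((w j i)⁻¹ : Rˣ) : R) := by
      rw [hT, ← Finset.prod_inv_distrib]; exact Units.coe_prod _ _
    rw [h1, map_prod, h2]
    calc ∏ i, σ ((w j i : Rˣ) : R)
        = ∏ i : Fin (2 * k + 1), (-1 : R) * (((w j i)⁻¹ : Rˣ) : R) := by
          refine Finset.prod_congr rfl fun i _ => ?_
          rw [hwodd j i]; ring
      _ = (∏ _i : Fin (2 * k + 1), (-1 : R)) * ∏ i, (((w j i)⁻¹ : Rˣ) : R) :=
          Finset.prod_mul_distrib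
      _ = -(∏ i, (((w j i)⁻¹ : Rˣ) : R)) := by
          rw [Finset.prod_const, Finset.card_univ, Fintype.card_fin,
            Odd.neg_one_pow ⟨k, by ring⟩, neg_one_mul]
  set Q : Fin (2 * k + 1) → Rˣ := fun j =>
    (∏ i ∈ Finset.univ.filter (fun i => i < j), (v i)⁻¹) *
      ∏ i ∈ Finset.univ.filter (fun i => j < i), v i with hQ
  have hstat : ∀ j : Fin (2 * k + 1),
      ((∏ i ∈ Finset.univ.filter (fun i => i < j), u i ^ ((-1 : ℤ) ^ ((i : ℕ) + 1)))
        * (∏ i ∈ Finset.univ.filter (fun i => j < i), u i ^ ((-1 : ℤ) ^ (i : ℕ))) : Rˣ) = Q j := by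
    intro j
    rw [hQ]
    congr 1
    refine Finset.prod_congr rfl fun i _ => ?_
    rw [pow_succ, mul_neg_one, zpow_neg]
  have herase : ∀ j : Fin (2 * k + 1), Finset.univ.erase j =
      (Finset.univ.filter (fun i => i < j)) ∪ (Finset.univ.filter (fun i => j < i)) := by
    intro j; ext i
    simp [lt_or_lt_iff_ne]
  have hdisj : ∀ j : Fin (2 * k + 1),
      Disjoint (Finset.univ.filter (fun i => i < j)) (Finset.univ.filter (fun i => j < i)) := by
    intro j
    rw [Finset.disjoint_left]
    intro i hi hj
    simp only [Finset.mem_filter] at hi hj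
    exact lt_asymm hi.2 hj.2
  have hQw : ∀ j : Fin (2 * k + 1), (∏ i ∈ Finset.univ.erase j, w (j : ℕ) i) = Q j := by
    intro j
    rw [herase j, Finset.prod_union (hdisj j), hQ]
    congr 1
    · refine Finset.prod_congr rfl fun i hi => ?_
      simp only [Finset.mem_filter] at hi
      have hlt : (i : ℕ) < (j : ℕ) := hi.2
      simp [hw, hlt]
    · refine Finset.prod_congr rfl fun i hi => ?_
      simp only [Finset.mem_filter] at hi
      have hlt : ¬ (i : ℕ) < (j : ℕ) := not_lt.mpr (le_of_lt hi.2)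
      simp [hw, hlt]
  have hTQ : ∀ j : Fin (2 * k + 1), T (j : ℕ) = v j * Q j := by
    intro j
    rw [hT]; dsimp only
    rw [← Finset.mul_prod_erase _ _ (Finset.mem_univ j), hQw]
    congr 1
    simp [hw]
  have hTQ' : ∀ j : Fin (2 * k + 1), T ((j : ℕ) + 1) = (v j)⁻¹ * Q j := by
    intro j
    rw [hT]; dsimp only
    rw [← Finset.mul_prod_erase _ _ (Finset.mem_univ j)]
    have heq : (∏ i ∈ Finset.univ.erase j, w ((j : ℕ) + 1) i)
        = ∏ i ∈ Finset.univ.erase j, w (j : ℕ) i := by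
      refine Finset.prod_congr rfl fun i hi => ?_
      have hne : (i : ℕ) ≠ (j : ℕ) := fun hc => (Finset.ne_of_mem_erase hi) (Fin.ext hc)
      have hiff : ((i : ℕ) < (j : ℕ) + 1) ↔ ((i : ℕ) < (j : ℕ)) := by omega
      by_cases h : (i : ℕ) < (j : ℕ)
      · simp [hw, h, hiff.mpr h]
      · have h2 : ¬ ((i : ℕ) < (j : ℕ) + 1) := by omega
        simp [hw, h, h2]
    rw [heq, hQw]
    congr 1
    simp [hw]
  have hsigmaQ : ∀ j, σ ((Q j : Rˣ) : R) = (((Q j)⁻¹ : Rˣ) : R) := by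
    intro j
    have hQeq : Q j = T (j : ℕ) * (v j)⁻¹ := by
      rw [hTQ j, mul_comm (v j) (Q j), mul_inv_cancel_right]
    have h2 : σ (((v j)⁻¹ : Rˣ) : R) = -((v j : Rˣ) : R) := by
      have h := (hvodd j).inv
      rwa [OddSymmetric, inv_inv] at h
    have h1 : ((Q j : Rˣ) : R) = ((T (j : ℕ) : Rˣ) : R) * (((v j)⁻¹ : Rˣ) : R) := by
      rw [← Units.val_mul, ← hQeq]
    have h3 : (((Q j)⁻¹ : Rˣ) : R) = (((T (j : ℕ))⁻¹ : Rˣ) : R) * ((v j : Rˣ) : R) := by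
      rw [← Units.val_mul]
      congr 1
      rw [hQeq, mul_inv, inv_inv]
    rw [h1, map_mul, hsigmaT, h2, h3]
    ring
  have hbu : ∀ j : Fin (2 * k + 1),
      ((-1 : R) ^ (j : ℕ)) * bracket σ ((u j : Rˣ) : R)
        = ((v j : Rˣ) : R) - (((v j)⁻¹ : Rˣ) : R) := by
    intro j
    have hσ := hu j
    rcases Nat.even_or_odd (j : ℕ) with he | ho
    · have hvj : v j = u j := by rw [hv]; simp only; rw [he.neg_one_pow, zpow_one]
      rw [he.neg_one_pow, one_mul, bracket, hσ, hvj]; ring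
    · have hvj : v j = (u j)⁻¹ := by rw [hv]; simp only; rw [ho.neg_one_pow, zpow_neg_one]
      rw [ho.neg_one_pow, bracket, hσ, hvj, inv_inv]; ring
  have hbQ : ∀ j, bracket σ ((Q j : Rˣ) : R) = ((Q j : Rˣ) : R) + (((Q j)⁻¹ : Rˣ) : R) := by
    intro j; rw [bracket, hsigmaQ]
  have key : ∀ j : Fin (2 * k + 1),
      ((-1 : R) ^ (j : ℕ)) * bracket σ ((u j : Rˣ) : R) * bracket σ ((Q j : Rˣ) : R)
        = (((T (j : ℕ) : Rˣ) : R) - (((T (j : ℕ))⁻¹ : Rˣ) : R))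
          - (((T ((j : ℕ) + 1) : Rˣ) : R) - (((T ((j : ℕ) + 1))⁻¹ : Rˣ) : R)) := by
    intro j
    rw [hbu j, hbQ j]
    have hA : ((v j : Rˣ) : R) * ((Q j : Rˣ) : R) = ((T (j : ℕ) : Rˣ) : R) := by
      rw [← Units.val_mul, ← hTQ j]
    have hDu : (T (j : ℕ))⁻¹ = (v j)⁻¹ * (Q j)⁻¹ := by rw [hTQ j, mul_inv]
    have hD : (((v j)⁻¹ : Rˣ) : R) * (((Q j)⁻¹ : Rˣ) : R) = (((T (j : ℕ))⁻¹ : Rˣ) : R) := by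
      rw [← Units.val_mul, ← hDu]
    have hC : (((v j)⁻¹ : Rˣ) : R) * ((Q j : Rˣ) : R) = ((T ((j : ℕ) + 1) : Rˣ) : R) := by
      rw [← Units.val_mul, ← hTQ' j]
    have hBu : (T ((j : ℕ) + 1))⁻¹ = v j * (Q j)⁻¹ := by rw [hTQ' j, mul_inv, inv_inv]
    have hB : ((v j : Rˣ) : R) * (((Q j)⁻¹ : Rˣ) : R) = (((T ((j : ℕ) + 1))⁻¹ : Rˣ) : R) := by
      rw [← Units.val_mul, ← hBu]
    linear_combination hA + hB - hC - hD
  have hP0 : T 0 = ∏ i, v i := by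
    rw [hT]; exact Finset.prod_congr rfl fun i _ => by simp [hw]
  have hTn : T (2 * k + 1) = (T 0)⁻¹ := by
    rw [hP0, hT, ← Finset.prod_inv_distrib]
    exact Finset.prod_congr rfl fun i _ => by simp [hw, i.isLt]
  have hsum : ∑ j : Fin (2 * k + 1), ((-1 : R) ^ (j : ℕ)) * bracket σ ((u j : Rˣ) : R)
          * bracket σ
            (((∏ i ∈ Finset.univ.filter (fun i => i < j), u i ^ ((-1 : ℤ) ^ ((i : ℕ) + 1)))
              * (∏ i ∈ Finset.univ.filter (fun i => j < i), u i ^ ((-1 : ℤ) ^ (i : ℕ))) : Rˣ) : R)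
      = ∑ j : Fin (2 * k + 1),
          ((fun m : ℕ => ((T m : Rˣ) : R) - (((T m)⁻¹ : Rˣ) : R)) (j : ℕ)
            - (fun m : ℕ => ((T m : Rˣ) : R) - (((T m)⁻¹ : Rˣ) : R)) ((j : ℕ) + 1)) := by
    refine Finset.sum_congr rfl fun j _ => ?_
    rw [hstat j, key j]
  rw [hsum, Fin.sum_univ_eq_sum_range
      (fun m : ℕ => ((fun m : ℕ => ((T m : Rˣ) : R) - (((T m)⁻¹ : Rˣ) : R)) m
        - (fun m : ℕ => ((T m : Rˣ) : R) - (((T m)⁻¹ : Rˣ) : R)) (m + 1))),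
    Finset.sum_range_sub' (fun m : ℕ => ((T m : Rˣ) : R) - (((T m)⁻¹ : Rˣ) : R))]
  have hPT : (∏ i, v i) = T 0 := hP0.symm
  rw [hPT, bracket, hsigmaT 0, hTn]
  have : (((T 0)⁻¹⁻¹ : Rˣ) : R) = ((T 0 : Rˣ) : R) := by rw [inv_inv]
  rw [this]
  ring
end

section
/- A Laurent polynomial f ∈ ℤ[x^{±1}] satisfies f(x) = f(−x⁻¹) (i.e., f is invariant under the ring automorphism x ↦ −x⁻¹) if and only if there exists a polynomial g ∈ ℤ[z] with f = g(x − x⁻¹); moreover, such g is unique. -/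
/-!
Write `w = x - x⁻¹`. Since `x · x⁻¹ = 1` gives `x² = w x + 1` and `x⁻¹ = x - w`, every Laurent
polynomial has the form `p(w) + q(w) x`. An endomorphism with `x ↦ -x⁻¹` also sends `x⁻¹ ↦ -x`, so
it fixes `w` and sends `p(w) + q(w) x` to `p(w) - q(w) x⁻¹`; invariance thus means
`q(w) (x + x⁻¹) = 0`, i.e. `q(w) = 0`.
Uniqueness: if `d = deg g`, the coefficient of `x^d` in `g(w)` is the leading coefficient of `g`.
-/

open LaurentPolynomial

namespace LaurentPolynomial

variable {R : Type*} [CommRing R]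

local notation "w" => (T 1 - T (-1) : R[T;T⁻¹])

theorem coeff_mul_T (f : R[T;T⁻¹]) (n m : ℤ) : (f * T n).coeff m = f.coeff (m - n) := by
  rw [T, AddMonoidAlgebra.coeff_mul_single_apply, mul_one, sub_eq_add_neg]

theorem T_one_mul_T_neg_one : (T 1 * T (-1) : R[T;T⁻¹]) = 1 := by
  rw [← T_add, add_neg_cancel, T_zero]

theorem T_one_add_T_neg_one_ne_zero [Nontrivial R] : (T 1 + T (-1) : R[T;T⁻¹]) ≠ 0 := by
  intro h
  simpa [T_apply] using congrArg (fun f : R[T;T⁻¹] => f.coeff 1) h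

theorem coeff_T_one_sub_T_neg_one_pow_of_le {n : ℕ} {m : ℤ} (h : n ≤ m) :
    (w ^ n).coeff m = if m = n then 1 else 0 := by
  induction n generalizing m with
  | zero => simp [← T_zero, T_apply, eq_comm]
  | succ n ih =>
    rw [pow_succ, mul_sub, AddMonoidAlgebra.coeff_sub, Finsupp.sub_apply, coeff_mul_T, coeff_mul_T,
      ih (by omega), ih (by omega)]
    grind

theorem coeff_aeval_T_one_sub_T_neg_one_natDegree (g : Polynomial R) :
    (Polynomial.aeval w g).coeff g.natDegree = g.leadingCoeff := by
  rw [Polynomial.aeval_eq_sum_range, AddMonoidAlgebra.coeff_sum, Finset.sum_apply',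
    Finset.sum_eq_single_of_mem g.natDegree (Finset.self_mem_range_succ _)]
  · simp [AddMonoidAlgebra.coeff_smul, coeff_T_one_sub_T_neg_one_pow_of_le le_rfl]
  · intro k hk hne
    rw [AddMonoidAlgebra.coeff_smul, Finsupp.smul_apply, coeff_T_one_sub_T_neg_one_pow_of_le
      (by have := Finset.mem_range_succ_iff.1 hk; omega), if_neg (by omega), smul_zero]

theorem aeval_T_one_sub_T_neg_one_injective :
    Function.Injective (Polynomial.aeval w : Polynomial R →ₐ[R] R[T;T⁻¹]) := by
  refine (injective_iff_map_eq_zero _).2 fun g hg => ?_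
  by_contra hne
  have := coeff_aeval_T_one_sub_T_neg_one_natDegree g
  rw [hg] at this
  exact Polynomial.leadingCoeff_ne_zero.2 hne this.symm

theorem exists_eq_aeval_add_aeval_mul_T_one (f : R[T;T⁻¹]) :
    ∃ p q : Polynomial R, f = Polynomial.aeval w p + Polynomial.aeval w q * T 1 := by
  induction f using LaurentPolynomial.induction_on with
  | h_C a => exact ⟨Polynomial.C a, 0, by simp⟩
  | h_add hp hq =>
    obtain ⟨p₁, q₁, rfl⟩ := hp
    obtain ⟨p₂, q₂, rfl⟩ := hq
    exact ⟨p₁ + p₂, q₁ + q₂, by simp only [map_add]; ring⟩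
  | h_C_mul_T n a ih =>
    obtain ⟨p, q, h⟩ := ih
    refine ⟨q, p + q * Polynomial.X, ?_⟩
    rw [← mul_T_assoc, h]
    simp only [map_add, map_mul, Polynomial.aeval_X]
    linear_combination Polynomial.aeval w q * T_one_mul_T_neg_one (R := R)
  | h_C_mul_T_Z n a ih =>
    obtain ⟨p, q, h⟩ := ih
    refine ⟨q - p * Polynomial.X, p, ?_⟩
    rw [sub_eq_add_neg, ← mul_T_assoc, h]
    simp only [map_sub, map_mul, Polynomial.aeval_X]
    linear_combination Polynomial.aeval w q * T_one_mul_T_neg_one (R := R)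

section Involution

variable (σ : R[T;T⁻¹] →ₐ[R] R[T;T⁻¹]) (hσ : σ (T 1) = -T (-1))
include hσ

theorem map_T_neg_one_of_map_T_one : σ (T (-1)) = -T 1 := by
  have h := congrArg σ (T_one_mul_T_neg_one (R := R))
  rw [map_mul, map_one, hσ] at h
  linear_combination (-T 1) * h - σ (T (-1)) * T_one_mul_T_neg_one (R := R)

theorem map_aeval_T_one_sub_T_neg_one (g : Polynomial R) :
    σ (Polynomial.aeval w g) = Polynomial.aeval w g := by
  rw [← Polynomial.aeval_algHom_apply, map_sub, hσ, map_T_neg_one_of_map_T_one σ hσ, neg_sub_neg]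

theorem map_eq_self_iff_exists_aeval [IsDomain R] (f : R[T;T⁻¹]) :
    σ f = f ↔ ∃ g : Polynomial R, Polynomial.aeval w g = f := by
  refine ⟨fun hf => ?_, fun ⟨g, hg⟩ => hg ▸ map_aeval_T_one_sub_T_neg_one σ hσ g⟩
  obtain ⟨p, q, rfl⟩ := exists_eq_aeval_add_aeval_mul_T_one f
  rw [map_add, map_mul, map_aeval_T_one_sub_T_neg_one σ hσ, map_aeval_T_one_sub_T_neg_one σ hσ,
    hσ] at hf
  have hq : Polynomial.aeval w q * (T 1 + T (-1)) = 0 := by linear_combination -hf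
  rw [(mul_eq_zero.1 hq).resolve_right T_one_add_T_neg_one_ne_zero, zero_mul, add_zero]
  exact ⟨p, rfl⟩

end Involution

end LaurentPolynomial

/-- A Laurent polynomial `f ∈ ℤ[x^{±1}]` is invariant under the ring automorphism
`x ↦ −x⁻¹` (here `σ`, a ring endomorphism with `σ(x) = −x⁻¹`) if and only if
`f = g(x − x⁻¹)` for a unique polynomial `g ∈ ℤ[z]`. -/
theorem invariant_iff_poly_in_x_sub_xinv
    (σ : LaurentPolynomial ℤ →+* LaurentPolynomial ℤ)
    (hσ : σ (T 1) = -T (-1))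
    (f : LaurentPolynomial ℤ) :
    σ f = f ↔ ∃! g : Polynomial ℤ, Polynomial.aeval (T 1 - T (-1)) g = f :=
  (map_eq_self_iff_exists_aeval σ.toIntAlgHom hσ f).trans
    ⟨fun ⟨g, hg⟩ => aeval_T_one_sub_T_neg_one_injective.existsUnique_of_mem_range ⟨g, hg⟩,
      ExistsUnique.exists⟩
end

section
/- There is a unique formal power series u ∈ ℤ[[y]] with constant term 1 satisfying u² − 4y·u − 1 = 0. Moreover u is a unit of ℤ[[y]] with u⁻¹ = u − 4y, and u ≡ 1 modulo the ideal 2·ℤ[[y]] (every coefficient of u except the constant term is even). -/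
open PowerSeries

/-!
Substituting `u = 1 + 2w` turns `u² − 4Xu − 1 = 0` into `4 (w² + (1 − 2X) w − X) = 0`. The
monic quadratic `T² + (1 − 2X) T − X` has the root `0` modulo `X` with unit derivative `1 − 2X`,
so Hensel's lemma in the `X`-adically complete ring `ℤ⟦X⟧` lifts it to a root `w` with `w(0) = 0`.
Any two roots `u, v` satisfy `(u − v)(u + v − 4X) = 0`, and `u + v − 4X` has constant term `2`,
so `u = v = 1 + 2w`; this gives uniqueness and the parity of the coefficients at once.
-/

theorem eq_of_sq_sub_mul_eq_of_add_ne {R : Type*} [CommRing R] [NoZeroDivisors R] {a x y : R}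
    (h : x ^ 2 - a * x = y ^ 2 - a * y) (hne : x + y ≠ a) : x = y := by
  have hfac : (x - y) * (x + y - a) = 0 := by linear_combination h
  exact sub_eq_zero.mp ((mul_eq_zero.mp hfac).resolve_right (sub_ne_zero.mpr hne))

theorem PowerSeries.exists_sq_add_mul_eq_X_mul {R : Type*} [CommRing R] (b c : R⟦X⟧)
    (hb : IsUnit (constantCoeff b)) :
    ∃ w : R⟦X⟧, constantCoeff w = 0 ∧ w ^ 2 + b * w = X * c := by
  let f : Polynomial R⟦X⟧ := Polynomial.X ^ 2 + Polynomial.C b * Polynomial.X -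
    Polynomial.C (X * c)
  have hmonic : f.Monic := by
    unfold f
    monicity!
  have hf0 : f.eval 0 ∈ Ideal.span {(X : R⟦X⟧)} := by
    simp [f, Ideal.mem_span_singleton]
  have hf'0 : IsUnit (Ideal.Quotient.mk (Ideal.span {(X : R⟦X⟧)}) (f.derivative.eval 0)) := by
    simpa [f] using (isUnit_iff_constantCoeff.mpr hb).map _
  obtain ⟨w, hroot, hw⟩ := HenselianRing.is_henselian f hmonic 0 hf0 hf'0
  refine ⟨w, ?_, ?_⟩
  · simpa [Ideal.mem_span_singleton, X_dvd_iff] using hw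
  · simpa [f, sub_eq_zero] using hroot.eq_zero

/-- There is a unique `u ∈ ℤ[[y]]` with constant term `1` satisfying
`u² − 4y·u − 1 = 0`; moreover any such `u` is a unit with `u⁻¹ = u − 4y`, and all
coefficients of `u` other than the constant term are even. -/
theorem exists_unique_root_and_properties :
    (∃! u : PowerSeries ℤ, constantCoeff u = 1 ∧
        u ^ 2 - 4 * PowerSeries.X * u - 1 = 0) ∧
    ∀ u : PowerSeries ℤ, constantCoeff u = 1 →
      u ^ 2 - 4 * PowerSeries.X * u - 1 = 0 →
        IsUnit u ∧ u * (u - 4 * PowerSeries.X) = 1 ∧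
          ∀ k : ℕ, k ≠ 0 → 2 ∣ coeff k u := by
  obtain ⟨w, hw0, hw⟩ := exists_sq_add_mul_eq_X_mul (R := ℤ) (1 - 2 * X) 1 (by simp)
  have hroot : (1 + 2 * w) ^ 2 - 4 * X * (1 + 2 * w) - 1 = 0 := by linear_combination 4 * hw
  have hconst : constantCoeff (1 + 2 * w) = 1 := by simp [hw0]
  have huniq : ∀ u : ℤ⟦X⟧, constantCoeff u = 1 → u ^ 2 - 4 * X * u - 1 = 0 → u = 1 + 2 * w := by
    intro u hu h
    refine eq_of_sq_sub_mul_eq_of_add_ne (a := 4 * X) (by linear_combination h - hroot) ?_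
    intro hsum
    simpa [hu, hconst] using congrArg constantCoeff hsum
  refine ⟨⟨1 + 2 * w, ⟨hconst, hroot⟩, fun u ⟨hu, h⟩ => huniq u hu h⟩, fun u hu h => ?_⟩
  have hinv : u * (u - 4 * X) = 1 := by linear_combination h
  refine ⟨IsUnit.of_mul_eq_one _ hinv, hinv, fun k hk => ?_⟩
  rw [huniq u hu h, map_add, ← map_ofNat C 2, coeff_C_mul, coeff_one, if_neg hk, zero_add]
  exact dvd_mul_right _ _
end

section
/- [Theorem 4.2, integrality] For every Laurent polynomial Ω ∈ ℤ[x₁^{±1},…,x_n^{±1}] with integer coefficients, the power series Ω(x₊(4y₁),…,x₊(4y_n)) ∈ ℚ[[y₁,…,y_n]] has integer coefficients, i.e., it lies in the image of ℤ[[y₁,…,y_n]]. (In the paper's notation: ℧(4y₁,…,4y_n) ∈ ℤ[[y₁,…,y_n]], where ℧(z₁,…,z_n) = Ω(x₊(z₁),…,x₊(z_n)).) -/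
noncomputable section

/-- The Laurent polynomial ring `Λ = ℚ[x₁^{±1},…,x_n^{±1}]`. -/
abbrev Lam (n : ℕ) : Type := AddMonoidAlgebra ℚ (Fin n →₀ ℤ)

/-- The variable `x_i ∈ Λ`. -/
def Xv {n : ℕ} (i : Fin n) : Lam n :=
  AddMonoidAlgebra.single (Finsupp.single i 1) 1

/-- The image of a one-variable power series under the substitution `z ↦ z_i`,
as an element of `ℚ[[z₁,…,z_n]]`. -/
def substXi {n : ℕ} (i : Fin n) (f : PowerSeries ℚ) : MvPowerSeries (Fin n) ℚ :=
  fun d => if d = Finsupp.single i (d i) then PowerSeries.coeff (d i) f else 0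

/-- Evaluation `Ω(u₁,…,u_n)` of a Laurent polynomial `Ω ∈ Λ` at a family of units
`u_i` of a commutative `ℚ`-algebra `A`. -/
def evalUnits {n : ℕ} {A : Type} [CommRing A] [Algebra ℚ A]
    (u : Fin n → Aˣ) (Ω : Lam n) : A :=
  (Ω.coeff : (Fin n →₀ ℤ) →₀ ℚ).sum fun a c => algebraMap ℚ A c * ((∏ i, u i ^ (a i) : Aˣ) : A)

/-!
With `C = 1 + t·C²` the Catalan series, `√(1 + 4t) = 1 + 2t·C(-t)` has integer coefficients, hence
so does `g = 2y + √(1 + 4y²)`. Both `g` and `x₊(4y)` are roots of `f² - 4y·f - 1` with constant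
term `1`, while the other root `4y - f` of a root `f` has constant term `-1`, so `x₊(4y) = g`.
Substituting `y = y_i` gives units of `ℤ[[y₁,…,y_n]]` (constant term `1`), and `Ω` with integer
coefficients evaluated at them stays in `ℤ[[y₁,…,y_n]]`.
-/

open PowerSeries

namespace PowerSeries

variable (R : Type*) [CommRing R]

def sqrtOneAddFourX : R⟦X⟧ :=
  1 + 2 * X * rescale (-1) (map (Nat.castRingHom R) catalanSeries)

theorem sqrtOneAddFourX_sq : sqrtOneAddFourX R ^ 2 = 1 + 4 * X := by
  set C := map (Nat.castRingHom R) catalanSeries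
  have hC : C ^ 2 * X + 1 = C := by
    simpa using congrArg (map (Nat.castRingHom R)) catalanSeries_sq_mul_X_add_one
  have hD : rescale (-1) C ^ 2 * -X + 1 = rescale (-1) C := by
    simpa [rescale_X] using congrArg (rescale (-1 : R)) hC
  unfold sqrtOneAddFourX
  linear_combination (-4 * X) * hD

def xPlusFourX : R⟦X⟧ :=
  2 * X + expand 2 two_ne_zero (sqrtOneAddFourX R)

theorem xPlusFourX_sq_sub : xPlusFourX R ^ 2 - 4 * X * xPlusFourX R - 1 = 0 := by
  have hE := congrArg (expand 2 two_ne_zero) (sqrtOneAddFourX_sq R)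
  simp only [map_pow, map_add, map_one, map_mul, map_ofNat, expand_X] at hE
  unfold xPlusFourX
  linear_combination hE

theorem constantCoeff_xPlusFourX : constantCoeff (xPlusFourX R) = 1 := by
  simp [xPlusFourX, sqrtOneAddFourX]

variable {R}

theorem map_xPlusFourX {S : Type*} [CommRing S] (f : R →+* S) :
    map f (xPlusFourX R) = xPlusFourX S := by
  have hcat : map f (map (Nat.castRingHom R) catalanSeries) =
      map (Nat.castRingHom S) catalanSeries := by
    rw [← RingHom.comp_apply, ← map_comp,
      Subsingleton.elim (f.comp (Nat.castRingHom R)) (Nat.castRingHom S)]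
  simp [xPlusFourX, sqrtOneAddFourX, ← rescale_map, hcat, map_ofNat]

theorem eq_of_sq_sub_mul_sub_one [IsDomain R] (h2 : (2 : R) ≠ 0) {c f g : R⟦X⟧}
    (hc : constantCoeff c = 0) (hf0 : constantCoeff f = 1) (hg0 : constantCoeff g = 1)
    (hf : f ^ 2 - c * f - 1 = 0) (hg : g ^ 2 - c * g - 1 = 0) : f = g := by
  have hfactor : (f - g) * (f + g - c) = 0 := by linear_combination hf - hg
  have hsum : f + g - c ≠ 0 := fun h => h2 <| by
    simpa [hc, hf0, hg0, one_add_one_eq_two] using congrArg constantCoeff h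
  exact sub_eq_zero.mp ((mul_eq_zero.mp hfactor).resolve_right hsum)

theorem constantCoeff_subst_X {σ : Type*} (i : σ) (f : R⟦X⟧) :
    MvPowerSeries.constantCoeff (f.subst (MvPowerSeries.X i)) = constantCoeff f := by
  classical
  rw [← MvPowerSeries.coeff_zero_eq_constantCoeff_apply, coeff_subst_single]
  simp

end PowerSeries

theorem rescale_four_eq_map_xPlusFourX (xp : ℚ⟦X⟧) (hxp1 : constantCoeff xp = 1)
    (hxpq : xp ^ 2 - X * xp - 1 = 0) :
    rescale (4 : ℚ) xp = map (Int.castRingHom ℚ) (xPlusFourX ℤ) := by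
  rw [map_xPlusFourX]
  refine eq_of_sq_sub_mul_sub_one two_ne_zero (c := 4 * X) (by simp)
    (by rw [← coeff_zero_eq_constantCoeff_apply, coeff_rescale, pow_zero, one_mul,
      coeff_zero_eq_constantCoeff_apply, hxp1])
    (constantCoeff_xPlusFourX ℚ) ?_ (xPlusFourX_sq_sub ℚ)
  simpa [rescale_X, map_ofNat] using congrArg (rescale (4 : ℚ)) hxpq

theorem substXi_eq_subst {n : ℕ} (i : Fin n) (f : ℚ⟦X⟧) :
    substXi i f = f.subst (MvPowerSeries.X i) := by
  ext d
  rw [coeff_subst_single]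
  rfl

theorem evalUnits_map_mem_range {n : ℕ} {A B : Type} [CommRing A] [CommRing B] [Algebra ℚ B]
    (φ : A →+* B) (W : Fin n → Aˣ) (Ω : Lam n)
    (hint : ∀ a : Fin n →₀ ℤ, ∃ m : ℤ, (Ω.coeff : (Fin n →₀ ℤ) →₀ ℚ) a = (m : ℚ)) :
    evalUnits (fun i => Units.map φ (W i)) Ω ∈ φ.range := by
  refine Subring.sum_mem _ fun a _ => ?_
  obtain ⟨m, hm⟩ := hint a
  refine ⟨m * (∏ i, W i ^ a i : Aˣ), ?_⟩
  simp [hm, ← map_zpow, ← map_prod]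

/-- Theorem 4.2 (integrality): for a Laurent polynomial `Ω` with integer coefficients,
the power series `℧(4y₁,…,4y_n) = Ω(x₊(4y₁),…,x₊(4y_n))` has integer coefficients. -/
theorem substitution_four_y_integral (n : ℕ) (xp : PowerSeries ℚ)
    (hxp1 : PowerSeries.constantCoeff xp = 1)
    (hxpq : xp ^ 2 - PowerSeries.X * xp - 1 = 0)
    (Ω : Lam n) (hint : ∀ a : Fin n →₀ ℤ, ∃ m : ℤ, (Ω.coeff : (Fin n →₀ ℤ) →₀ ℚ) a = (m : ℚ))
    (u : Fin n → (MvPowerSeries (Fin n) ℚ)ˣ)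
    (hu : ∀ i, (u i : MvPowerSeries (Fin n) ℚ) = substXi i (PowerSeries.rescale (4 : ℚ) xp)) :
    ∀ d : Fin n →₀ ℕ, ∃ m : ℤ, MvPowerSeries.coeff d (evalUnits u Ω) = (m : ℚ) := by
  set φ := MvPowerSeries.map (σ := Fin n) (Int.castRingHom ℚ)
  have hw (i : Fin n) :
      IsUnit ((xPlusFourX ℤ).subst (MvPowerSeries.X i : MvPowerSeries (Fin n) ℤ)) := by
    simp [MvPowerSeries.isUnit_iff_constantCoeff, constantCoeff_subst_X, constantCoeff_xPlusFourX]
  have hu_lift : u = fun i => Units.map φ (hw i).unit := by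
    funext i
    ext1
    rw [hu, rescale_four_eq_map_xPlusFourX xp hxp1 hxpq, substXi_eq_subst,
      ← MvPowerSeries.map_X (f := Int.castRingHom ℚ) i, ← map_subst (HasSubst.X i)]
    rfl
  intro d
  obtain ⟨F, hF⟩ := hu_lift ▸ evalUnits_map_mem_range φ (fun i => (hw i).unit) Ω hint
  exact ⟨MvPowerSeries.coeff d F, by rw [← hF, MvPowerSeries.coeff_map]; rfl⟩

end
end
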